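/- Let Y, Ỹ ∈ ℝ^{n×k} have orthonormal columns, and set E = YYᵀ − ỸỸᵀ with ‖E‖_F ≤ ε for some ε ≥ 0. Let X̃, X_opt ∈ ℝ^{n×k} have orthonormal columns, let γ ≥ 1, and suppose ‖Ỹ − X̃X̃ᵀỸ‖_F² ≤ γ · ‖Ỹ − X_opt X_optᵀ Ỹ‖_F². Then ‖Y − X̃X̃ᵀY‖_F ≤ √γ · ‖Y − X_opt X_optᵀ Y‖_F + 2√γ · ε. -/

import Mathlib

/-!
Write `P = XXᵀ` for an orthogonal projection. Since `Yᵀ` is an isometry for the Frobenius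
norm, `‖Y − PY‖ = ‖(1 − P)YYᵀ‖`, so the residual depends on `Y` only through the projection
`YYᵀ`, and `1 − P` contracts the error `E = YYᵀ − ỸỸᵀ`. Hence replacing `Y` by `Ỹ` moves the
residual of any projection by at most `‖E‖ ≤ ε`. Going from `Y` to `Ỹ` for `X̃`, using the
`γ`-approximation on `Ỹ`, and going back from `Ỹ` to `Y` for `X_opt` costs `ε + √γ ε ≤ 2√γ ε`.
-/

open Matrix

/-- Squared Frobenius norm of a real matrix: `‖A‖_F² = Σ_{i,j} A_{ij}²`. -/
noncomputable def frobSq {m n : ℕ} (A : Matrix (Fin m) (Fin n) ℝ) : ℝ :=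
  ∑ i, ∑ j, (A i j) ^ 2

/-- Frobenius norm of a real matrix. -/
noncomputable def frobNorm {m n : ℕ} (A : Matrix (Fin m) (Fin n) ℝ) : ℝ :=
  Real.sqrt (frobSq A)

section Frobenius

attribute [local instance] Matrix.frobeniusNormedAddCommGroup

variable {m n : ℕ}

lemma frobNorm_eq_norm (A : Matrix (Fin m) (Fin n) ℝ) : frobNorm A = ‖A‖ := by
  rw [Matrix.frobenius_norm_def, frobNorm, frobSq, Real.sqrt_eq_rpow]
  congr 1
  refine Finset.sum_congr rfl fun i _ => Finset.sum_congr rfl fun j _ => ?_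
  rw [Real.norm_eq_abs, Real.rpow_two, sq_abs]

lemma frobNorm_nonneg (A : Matrix (Fin m) (Fin n) ℝ) : 0 ≤ frobNorm A :=
  Real.sqrt_nonneg _

lemma frobNorm_add_le (A B : Matrix (Fin m) (Fin n) ℝ) :
    frobNorm (A + B) ≤ frobNorm A + frobNorm B := by
  simp only [frobNorm_eq_norm]
  exact norm_add_le A B

lemma frobNorm_sub_rev (A B : Matrix (Fin m) (Fin n) ℝ) :
    frobNorm (A - B) = frobNorm (B - A) := by
  simp only [frobNorm_eq_norm]
  exact norm_sub_rev A B

end Frobenius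

section Projection

variable {m n k p : ℕ}

lemma frobSq_eq_trace_transpose_mul (A : Matrix (Fin m) (Fin n) ℝ) :
    frobSq A = trace (Aᵀ * A) := by
  rw [frobSq, Finset.sum_comm]
  simp [trace, mul_apply, sq]

lemma frobSq_mul_transpose_of_orthonormal {Y : Matrix (Fin n) (Fin k) ℝ} (hY : Yᵀ * Y = 1)
    (B : Matrix (Fin m) (Fin k) ℝ) : frobSq (B * Yᵀ) = frobSq B := by
  rw [frobSq_eq_trace_transpose_mul, frobSq_eq_trace_transpose_mul, transpose_mul,
    transpose_transpose, Matrix.mul_assoc, trace_mul_comm]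
  simp only [Matrix.mul_assoc, hY, Matrix.mul_one]

lemma frobNorm_mul_transpose_of_orthonormal {Y : Matrix (Fin n) (Fin k) ℝ} (hY : Yᵀ * Y = 1)
    (B : Matrix (Fin m) (Fin k) ℝ) : frobNorm (B * Yᵀ) = frobNorm B := by
  rw [frobNorm, frobNorm, frobSq_mul_transpose_of_orthonormal hY]

lemma frobSq_sub_proj_add_frobSq {X : Matrix (Fin n) (Fin p) ℝ} (hX : Xᵀ * X = 1)
    (A : Matrix (Fin n) (Fin m) ℝ) :
    frobSq (A - X * Xᵀ * A) + frobSq (Xᵀ * A) = frobSq A := by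
  have hXX {q : ℕ} (B : Matrix (Fin p) (Fin q) ℝ) : Xᵀ * (X * B) = B := by
    rw [← Matrix.mul_assoc, hX, Matrix.one_mul]
  simp only [frobSq_eq_trace_transpose_mul, ← trace_add]
  congr 1
  simp only [transpose_sub, transpose_mul, transpose_transpose, Matrix.sub_mul, Matrix.mul_sub,
    Matrix.mul_assoc, hXX]
  abel

lemma frobNorm_sub_proj_le {X : Matrix (Fin n) (Fin p) ℝ} (hX : Xᵀ * X = 1)
    (A : Matrix (Fin n) (Fin m) ℝ) : frobNorm (A - X * Xᵀ * A) ≤ frobNorm A := by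
  refine Real.sqrt_le_sqrt ?_
  have hXA : 0 ≤ frobSq (Xᵀ * A) :=
    Finset.sum_nonneg fun _ _ => Finset.sum_nonneg fun _ _ => sq_nonneg _
  linarith [frobSq_sub_proj_add_frobSq hX A]

lemma frobNorm_sub_proj_le_add {X : Matrix (Fin n) (Fin p) ℝ} {Y : Matrix (Fin n) (Fin k) ℝ}
    {Z : Matrix (Fin n) (Fin m) ℝ} (hX : Xᵀ * X = 1) (hY : Yᵀ * Y = 1) (hZ : Zᵀ * Z = 1) :
    frobNorm (Y - X * Xᵀ * Y) ≤ frobNorm (Z - X * Xᵀ * Z) + frobNorm (Y * Yᵀ - Z * Zᵀ) := by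
  set E := Y * Yᵀ - Z * Zᵀ
  have hsplit : (Y - X * Xᵀ * Y) * Yᵀ = (Z - X * Xᵀ * Z) * Zᵀ + (E - X * Xᵀ * E) := by
    simp only [E, Matrix.sub_mul, Matrix.mul_sub, Matrix.mul_assoc]
    abel
  calc frobNorm (Y - X * Xᵀ * Y)
      = frobNorm ((Y - X * Xᵀ * Y) * Yᵀ) := (frobNorm_mul_transpose_of_orthonormal hY _).symm
    _ ≤ frobNorm ((Z - X * Xᵀ * Z) * Zᵀ) + frobNorm (E - X * Xᵀ * E) :=
        hsplit ▸ frobNorm_add_le _ _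
    _ ≤ frobNorm (Z - X * Xᵀ * Z) + frobNorm E := by
        rw [frobNorm_mul_transpose_of_orthonormal hZ]
        exact add_le_add_right (frobNorm_sub_proj_le hX E) _

end Projection

theorem approx_clustering_frobNorm_bound_general (n k : ℕ)
    (Y Yt Xt Xopt : Matrix (Fin n) (Fin k) ℝ)
    (hY : Yᵀ * Y = 1) (hYt : Ytᵀ * Yt = 1)
    (hXt : Xtᵀ * Xt = 1) (hXopt : Xoptᵀ * Xopt = 1)
    (ε : ℝ)
    (hE : frobNorm (Y * Yᵀ - Yt * Ytᵀ) ≤ ε)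
    (γ : ℝ) (hγ : 1 ≤ γ)
    (happrox : frobSq (Yt - Xt * Xtᵀ * Yt) ≤ γ * frobSq (Yt - Xopt * Xoptᵀ * Yt)) :
    frobNorm (Y - Xt * Xtᵀ * Y) ≤
      Real.sqrt γ * frobNorm (Y - Xopt * Xoptᵀ * Y) + 2 * Real.sqrt γ * ε := by
  have hto := frobNorm_sub_proj_le_add hXt hY hYt
  have hback := frobNorm_sub_proj_le_add hXopt hYt hY
  rw [frobNorm_sub_rev (Yt * Ytᵀ)] at hback
  have happrox' : frobNorm (Yt - Xt * Xtᵀ * Yt) ≤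
      Real.sqrt γ * frobNorm (Yt - Xopt * Xoptᵀ * Yt) := by
    rw [frobNorm, frobNorm, ← Real.sqrt_mul (by linarith)]
    exact Real.sqrt_le_sqrt happrox
  have hsγ : 1 ≤ Real.sqrt γ := Real.one_le_sqrt.mpr hγ
  have hε : 0 ≤ ε := (frobNorm_nonneg _).trans hE
  calc frobNorm (Y - Xt * Xtᵀ * Y)
      ≤ frobNorm (Yt - Xt * Xtᵀ * Yt) + ε := by linarith
    _ ≤ Real.sqrt γ * frobNorm (Yt - Xopt * Xoptᵀ * Yt) + ε := by linarith
    _ ≤ Real.sqrt γ * (frobNorm (Y - Xopt * Xoptᵀ * Y) + ε) + ε := by gcongr; linarith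
    _ ≤ Real.sqrt γ * frobNorm (Y - Xopt * Xoptᵀ * Y) + 2 * Real.sqrt γ * ε := by nlinarith

/-- If `Y, Ỹ` have orthonormal columns with `‖YYᵀ − ỸỸᵀ‖_F ≤ ε`, and the
indicator matrix `X̃` is a `γ`-approximate `k`-means solution on `Ỹ`, then
`‖Y − X̃X̃ᵀY‖_F ≤ √γ·‖Y − X_opt X_optᵀ Y‖_F + 2√γ·ε`. -/
theorem approx_clustering_frobNorm_bound (n k : ℕ)
    (Y Yt Xt Xopt : Matrix (Fin n) (Fin k) ℝ)
    (hY : Yᵀ * Y = 1) (hYt : Ytᵀ * Yt = 1)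
    (hXt : Xtᵀ * Xt = 1) (hXopt : Xoptᵀ * Xopt = 1)
    (ε : ℝ) (hε : 0 ≤ ε)
    (hE : frobNorm (Y * Yᵀ - Yt * Ytᵀ) ≤ ε)
    (γ : ℝ) (hγ : 1 ≤ γ)
    (happrox : frobSq (Yt - Xt * Xtᵀ * Yt) ≤ γ * frobSq (Yt - Xopt * Xoptᵀ * Yt)) :
    frobNorm (Y - Xt * Xtᵀ * Y) ≤
      Real.sqrt γ * frobNorm (Y - Xopt * Xoptᵀ * Y) + 2 * Real.sqrt γ * ε :=
  approx_clustering_frobNorm_bound_general n k Y Yt Xt Xopt hY hYt hXt hXopt ε hE γ hγ happrox
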